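/- Let A be a complex unital Banach algebra, U ⊆ ℂ an open set, and σ : ℂ → ℂ analytic on U with σ(U) ⊆ U. Let 𝔞, 𝔟, 𝔠, 𝔡 ∈ A. Let f : ℂ → A and g, t : ℂ → ℂ be analytic on U and satisfy, for every z ∈ U: g(σ z) = g(z), t(σ z) = t(z), g'(z) ≠ 0, 𝔠·f(z) + 𝔡 is a unit of A, and f(σ z) = (𝔞·f(z) + 𝔟)·(𝔠·f(z) + 𝔡)⁻¹. Define ḟ(z) = g'(z)⁻¹·f'(z), f̈(z) = g'(z)⁻¹·(ḟ)'(z), and f_t(z) = f(z) + t(z)·ḟ(z)·(1 − (t(z)/2)·ḟ(z)⁻¹·f̈(z))⁻¹. Then for every z ∈ U such that ḟ and 1 − (t/2)·ḟ⁻¹·f̈ are units of A at both z and σ z, and such that 𝔠·f_t(z) + 𝔡 is a unit of A, one has f_t(σ z) = (𝔞·f_t(z) + 𝔟)·(𝔠·f_t(z) + 𝔡)⁻¹. -/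

import Mathlib

/-!
Write `M x = (a x + b) (c x + d)⁻¹` and `D = g'⁻¹ d/dz`. Since `g ∘ σ = g`, the operator `D`
commutes with composition by `σ`, so applying it once and twice to `f ∘ σ = M ∘ f` gives
`ḟ (σ z) = M'(f z) ḟ z` and `f̈ (σ z) = M'(f z) f̈ z - 2 M'(f z) ḟ z · c ḟ z (c f z + d)⁻¹`,
where `M'(x) v = (a - M(x) c) v (c x + d)⁻¹`.

The rest is algebra. The increment of a Möbius map is
`M (x + h) - M x = (a - M(x) c) h (c (x + h) + d)⁻¹`, and for `h = t ḟ r⁻¹` with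
`r = 1 - (t/2) ḟ⁻¹ f̈` the transformation rules for `ḟ, f̈` give
`R q = q r + t c ḟ = (c (f + h) + d) r`, where `q = c f + d` and `R` is the denominator built
from `ḟ (σ z), f̈ (σ z)`. This turns the increment into the deformation term at `σ z`; the same
`t` appears there because `t` is `σ`-invariant.
-/

open Set Ring

noncomputable section

section Algebra

variable {A : Type*} [Ring A] (a b c d : A)

def mobius (x : A) : A := (a * x + b) * (c * x + d)⁻¹ʳ

def mobiusDeriv (x v : A) : A := (a - mobius a b c d x * c) * v * (c * x + d)⁻¹ʳ

variable {a b c d}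

theorem mobius_add {x h : A} (hq : IsUnit (c * x + d)) (hq' : IsUnit (c * (x + h) + d)) :
    mobius a b c d (x + h) =
      mobius a b c d x + (a - mobius a b c d x * c) * h * (c * (x + h) + d)⁻¹ʳ := by
  have hMq : mobius a b c d x * (c * x + d) = a * x + b := inverse_mul_cancel_right _ _ hq
  rw [eq_comm, mobius.eq_1 a b c d (x + h), eq_mul_inverse_iff_mul_eq _ _ _ hq',
    add_mul, inverse_mul_cancel_right _ _ hq']
  calc mobius a b c d x * (c * (x + h) + d) + (a - mobius a b c d x * c) * h
      = mobius a b c d x * (c * x + d) + a * h := by noncomm_ring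
    _ = a * (x + h) + b := by rw [hMq]; noncomm_ring

variable {𝕜 : Type*} [Field 𝕜] [Algebra 𝕜 A]

def deformationTerm (t : 𝕜) (x₁ x₂ : A) : A := t • (x₁ * (1 - (t / 2) • (x₁⁻¹ʳ * x₂))⁻¹ʳ)

theorem mobiusDeriv_smul (x v : A) (s : 𝕜) :
    mobiusDeriv a b c d x (s • v) = s • mobiusDeriv a b c d x v := by
  simp only [mobiusDeriv, mul_smul_comm, smul_mul_assoc]

theorem mobius_add_deformationTerm [NeZero (2 : 𝕜)] {x x₁ x₂ w₁ w₂ : A} {t : 𝕜}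
    (hq : IsUnit (c * x + d)) (hx₁ : IsUnit x₁) (hw₁ : IsUnit w₁)
    (hw₁_eq : w₁ = mobiusDeriv a b c d x x₁)
    (hw₂_eq : w₂ = mobiusDeriv a b c d x x₂ -
      (2 : 𝕜) • (mobiusDeriv a b c d x x₁ * c * x₁ * (c * x + d)⁻¹ʳ))
    (hr : IsUnit (1 - (t / 2) • (x₁⁻¹ʳ * x₂))) (hR : IsUnit (1 - (t / 2) • (w₁⁻¹ʳ * w₂)))
    (hq' : IsUnit (c * (x + deformationTerm t x₁ x₂) + d)) :
    mobius a b c d x + deformationTerm t w₁ w₂ = mobius a b c d (x + deformationTerm t x₁ x₂) := by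
  rw [mobius_add hq hq', add_right_inj, eq_mul_inverse_iff_mul_eq _ _ _ hq', deformationTerm,
    deformationTerm]
  rw [← hw₁_eq, mobiusDeriv] at hw₂_eq
  rw [mobiusDeriv] at hw₁_eq
  set q := c * x + d
  set p := a - mobius a b c d x * c
  set r := 1 - (t / 2) • (x₁⁻¹ʳ * x₂)
  set R := 1 - (t / 2) • (w₁⁻¹ʳ * w₂)
  set q' := c * (x + t • (x₁ * r⁻¹ʳ)) + d
  have hw₁q : w₁ * q = p * x₁ := by rw [hw₁_eq, inverse_mul_cancel_right _ _ hq]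
  have hw₂q : w₂ * q = w₁ * (q * x₁⁻¹ʳ * x₂ - (2 : 𝕜) • (c * x₁)) := by
    have hp : p = w₁ * q * x₁⁻¹ʳ := by rw [hw₁q, mul_inverse_cancel_right _ _ hx₁]
    rw [hw₂_eq, sub_mul, smul_mul_assoc, inverse_mul_cancel_right _ _ hq,
      inverse_mul_cancel_right _ _ hq, hp]
    simp only [mul_sub, mul_smul_comm, mul_assoc]
  have hRq : R * q = q * r + t • (c * x₁) := by
    have hquot : w₁⁻¹ʳ * w₂ * q = q * x₁⁻¹ʳ * x₂ - (2 : 𝕜) • (c * x₁) := by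
      rw [mul_assoc, hw₂q, inverse_mul_cancel_left _ _ hw₁]
    simp only [R, r, sub_mul, mul_sub, smul_mul_assoc, mul_smul_comm, one_mul, mul_one, hquot,
      smul_sub, smul_smul, mul_assoc]
    rw [div_mul_cancel₀ t two_ne_zero]
    abel
  have hq'r : q' * r = q * r + t • (c * x₁) := by
    rw [show q' = q + t • (c * (x₁ * r⁻¹ʳ)) by simp only [q', q, mul_add, mul_smul_comm]; abel,
      add_mul, smul_mul_assoc, mul_assoc, mul_assoc, inverse_mul_cancel _ hr, mul_one]
  have hRq' : R⁻¹ʳ * q' = q * r⁻¹ʳ := by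
    rw [inverse_mul_eq_iff_eq_mul _ _ _ hR, ← mul_assoc, eq_mul_inverse_iff_mul_eq _ _ _ hr, hq'r,
      hRq]
  rw [smul_mul_assoc, mul_smul_comm, mul_assoc, hRq', ← mul_assoc, hw₁q, mul_assoc]

end Algebra

section Calculus

variable {𝕜 : Type*} [NontriviallyNormedField 𝕜]

def derivWrt {E : Type*} [NormedAddCommGroup E] [NormedSpace 𝕜 E] (g : 𝕜 → 𝕜) (φ : 𝕜 → E)
    (z : 𝕜) : E :=
  (deriv g z)⁻¹ • deriv φ z

theorem derivWrt_comp_eqOn {E : Type*} [NormedAddCommGroup E] [NormedSpace 𝕜 E]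
    {U : Set 𝕜} {σ g : 𝕜 → 𝕜} {φ Φ : 𝕜 → E} (hU : IsOpen U) (hσ : DifferentiableOn 𝕜 σ U)
    (hσU : MapsTo σ U U) (hg : DifferentiableOn 𝕜 g U) (hgσ : EqOn (g ∘ σ) g U)
    (hg' : ∀ z ∈ U, deriv g z ≠ 0) (hφ : DifferentiableOn 𝕜 φ U) (hφσ : EqOn (φ ∘ σ) Φ U) :
    EqOn (derivWrt g φ ∘ σ) (derivWrt g Φ) U := by
  intro z hz
  have hσz := (hσ z hz).differentiableAt (hU.mem_nhds hz)
  have hU_σz := hU.mem_nhds (hσU hz)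
  have hgz : deriv g z = deriv g (σ z) * deriv σ z := by
    rw [← (hgσ.eventuallyEq_of_mem (hU.mem_nhds hz)).deriv_eq,
      deriv_comp z ((hg _ (hσU hz)).differentiableAt hU_σz) hσz]
  have hΦz : deriv Φ z = deriv σ z • deriv φ (σ z) := by
    rw [← (hφσ.eventuallyEq_of_mem (hU.mem_nhds hz)).deriv_eq,
      deriv.scomp z ((hφ _ (hσU hz)).differentiableAt hU_σz) hσz]
  have hσ' : deriv σ z ≠ 0 := right_ne_zero_of_mul (hgz ▸ hg' z hz)
  simp only [Function.comp_apply, derivWrt, hgz, hΦz, smul_smul]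
  field_simp

variable {A : Type*} [NormedRing A] [NormedAlgebra 𝕜 A] [HasSummableGeomSeries A]
  {a b c d : A} {u v : 𝕜 → A} {u' v' : A} {z : 𝕜}

theorem HasDerivAt.ringInverse (hu : HasDerivAt u u' z) (hz : IsUnit (u z)) :
    HasDerivAt (fun x => (u x)⁻¹ʳ) (-((u z)⁻¹ʳ * u' * (u z)⁻¹ʳ)) z := by
  obtain ⟨x, hx⟩ := hz
  have H := hasFDerivAt_ringInverse (𝕜 := 𝕜) x
  rw [hx] at H
  refine (H.comp_hasDerivAt z hu).congr_deriv ?_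
  simp [← hx, ContinuousLinearMap.mulLeftRight_apply]

theorem HasDerivAt.mobius (hu : HasDerivAt u u' z) (hq : IsUnit (c * u z + d)) :
    HasDerivAt (fun x => mobius a b c d (u x)) (mobiusDeriv a b c d (u z) u') z := by
  refine (((hu.const_mul a).add_const b).mul
    (((hu.const_mul c).add_const d).ringInverse hq)).congr_deriv ?_
  simp only [_root_.mobiusDeriv, _root_.mobius]
  noncomm_ring

theorem HasDerivAt.mobiusDeriv (hu : HasDerivAt u u' z) (hv : HasDerivAt v v' z)
    (hq : IsUnit (c * u z + d)) :
    HasDerivAt (fun x => mobiusDeriv a b c d (u x) (v x))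
      (mobiusDeriv a b c d (u z) v' - mobiusDeriv a b c d (u z) u' * c * v z * (c * u z + d)⁻¹ʳ
        - mobiusDeriv a b c d (u z) (v z) * c * u' * (c * u z + d)⁻¹ʳ) z := by
  refine ((((hu.mobius hq).mul_const c).const_sub a).mul hv).mul
    (((hu.const_mul c).add_const d).ringInverse hq) |>.congr_deriv ?_
  simp only [_root_.mobiusDeriv, Pi.mul_apply]
  noncomm_ring

theorem derivWrt_mobius_comp {f : 𝕜 → A} {g : 𝕜 → 𝕜} (hf : DifferentiableAt 𝕜 f z)
    (hq : IsUnit (c * f z + d)) :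
    derivWrt g (fun x => mobius a b c d (f x)) z = mobiusDeriv a b c d (f z) (derivWrt g f z) := by
  rw [derivWrt, (hf.hasDerivAt.mobius hq).deriv, derivWrt, mobiusDeriv_smul]

theorem derivWrt_mobiusDeriv_comp {f : 𝕜 → A} {g : 𝕜 → 𝕜} (hf : DifferentiableAt 𝕜 f z)
    (hfd : DifferentiableAt 𝕜 (derivWrt g f) z) (hq : IsUnit (c * f z + d))
    (hg' : deriv g z ≠ 0) :
    derivWrt g (fun x => mobiusDeriv a b c d (f x) (derivWrt g f x)) z =
      mobiusDeriv a b c d (f z) (derivWrt g (derivWrt g f) z) -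
        (2 : 𝕜) • (mobiusDeriv a b c d (f z) (derivWrt g f z) * c * derivWrt g f z *
          (c * f z + d)⁻¹ʳ) := by
  have hf' : deriv f z = deriv g z • derivWrt g f z := by
    rw [derivWrt, smul_smul, mul_inv_cancel₀ hg', one_smul]
  rw [derivWrt, (hf.hasDerivAt.mobiusDeriv hfd.hasDerivAt hq).deriv, hf',
    derivWrt.eq_1 g (derivWrt g f), mobiusDeriv_smul, mobiusDeriv_smul]
  simp only [smul_mul_assoc, mul_smul_comm, smul_sub, smul_smul, inv_mul_cancel₀ hg', one_smul]
  rw [two_smul]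
  abel

end Calculus

end

theorem equivariant_deformation
    (A : Type*) [NormedRing A] [NormedAlgebra ℂ A] [CompleteSpace A]
    (U : Set ℂ) (hU : IsOpen U)
    (σ : ℂ → ℂ) (hσ : AnalyticOnNhd ℂ σ U) (hσU : Set.MapsTo σ U U)
    (a b c d : A)
    (f : ℂ → A) (g t : ℂ → ℂ)
    (hf : AnalyticOnNhd ℂ f U) (hg : AnalyticOnNhd ℂ g U)
    (hginv : ∀ z ∈ U, g (σ z) = g z)
    (htinv : ∀ z ∈ U, t (σ z) = t z)
    (hg' : ∀ z ∈ U, deriv g z ≠ 0)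
    (hunit : ∀ z ∈ U, IsUnit (c * f z + d))
    (hequiv : ∀ z ∈ U, f (σ z) = (a * f z + b) * Ring.inverse (c * f z + d))
    (fd fdd ft : ℂ → A)
    (hfd : ∀ z, fd z = (deriv g z)⁻¹ • deriv f z)
    (hfdd : ∀ z, fdd z = (deriv g z)⁻¹ • deriv fd z)
    (hft : ∀ z, ft z = f z +
      t z • (fd z * Ring.inverse (1 - (t z / 2) • (Ring.inverse (fd z) * fdd z)))) :
    ∀ z ∈ U, IsUnit (fd z) → IsUnit (fd (σ z)) →
      IsUnit (1 - (t z / 2) • (Ring.inverse (fd z) * fdd z)) →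
      IsUnit (1 - (t (σ z) / 2) • (Ring.inverse (fd (σ z)) * fdd (σ z))) →
      IsUnit (c * ft z + d) →
      ft (σ z) = (a * ft z + b) * Ring.inverse (c * ft z + d) := by
  intro z hz hfd_z hfd_σz hr hr_σz hq'
  obtain rfl : fd = derivWrt g f := funext hfd
  obtain rfl : fdd = derivWrt g (derivWrt g f) := funext hfdd
  have hfd_an : AnalyticOnNhd ℂ (derivWrt g f) U := fun u hu =>
    ((hg.deriv u hu).inv (hg' u hu)).smul (hf.deriv u hu)
  have hdiff (u) (hu : u ∈ U) : DifferentiableAt ℂ f u := (hf u hu).differentiableAt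
  have hlaw₁ : EqOn (derivWrt g f ∘ σ) (fun u => mobiusDeriv a b c d (f u) (derivWrt g f u)) U :=
    fun u hu => (derivWrt_comp_eqOn hU hσ.differentiableOn hσU hg.differentiableOn hginv hg'
      hf.differentiableOn hequiv hu).trans (derivWrt_mobius_comp (hdiff u hu) (hunit u hu))
  have hlaw₂ := (derivWrt_comp_eqOn hU hσ.differentiableOn hσU hg.differentiableOn hginv hg'
      hfd_an.differentiableOn hlaw₁ hz).trans
    (derivWrt_mobiusDeriv_comp (hdiff z hz) (hfd_an z hz).differentiableAt (hunit z hz) (hg' z hz))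
  rw [hft] at hq'
  rw [hft, hft, htinv z hz, hequiv z hz]
  rw [htinv z hz] at hr_σz
  exact mobius_add_deformationTerm (hunit z hz) hfd_z hfd_σz (hlaw₁ hz) hlaw₂ hr hr_σz hq'
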